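/- arXiv:1703.08409 — 2 statements merged into one kernel-verified Lean document; each statement's English description precedes it below -/
import Mathlib

section
/- Let E be a finite-dimensional real inner product space and d : E → E a linear map with d ∘ d = 0; let d* be the adjoint of d and Δ = d ∘ d* + d* ∘ d. Then range(d) ⊆ ker(d), ker(Δ) ⊆ ker(d), and the composition of the inclusion ker(Δ) ↪ ker(d) with the quotient map ker(d) → ker(d)/range(d) is a linear isomorphism; that is, ker(Δ) is isomorphic to the cohomology ker(d)/range(d). -/
/-! Since `⟪Δx, x⟫ = ‖d* x‖² + ‖d x‖²`, the harmonic space `ker Δ` is `ker d ⊓ ker d*`,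
and `ker d* = (range d)ᗮ`. As `range d ≤ ker d`, the harmonic space is therefore the
orthogonal complement of `range d` inside `ker d`, and a complement of `range d` in `ker d`
maps isomorphically onto `ker d / range d`. -/

open LinearMap Submodule

theorem Submodule.bijective_mkQ_comp_inclusion_of_disjoint_of_sup_eq
    {R M : Type*} [Ring R] [AddCommGroup M] [Module R M] {U V W : Submodule R M}
    (hWV : W ≤ V) (hUW : Disjoint U W) (hUWV : U ⊔ W = V) :
    Function.Bijective ((U.comap V.subtype).mkQ ∘ₗ inclusion hWV) := by
  constructor
  · rw [injective_iff_map_eq_zero]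
    rintro ⟨w, hw⟩ hw0
    have hwU : w ∈ U := by simpa [Submodule.Quotient.mk_eq_zero] using hw0
    exact Subtype.ext (hUW.le_bot ⟨hwU, hw⟩)
  · rintro ⟨⟨v, hv⟩⟩
    obtain ⟨u, hu, w, hw, rfl⟩ := mem_sup.mp (hUWV ▸ hv)
    refine ⟨⟨w, hw⟩, (Submodule.Quotient.eq _).mpr ?_⟩
    simpa using U.neg_mem hu

section InnerProduct

variable {𝕜 E : Type*} [RCLike 𝕜] [NormedAddCommGroup E] [InnerProductSpace 𝕜 E]
  [FiniteDimensional 𝕜 E]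

theorem LinearMap.ker_adjoint_comp_self_add_adjoint_comp_self (S T : E →ₗ[𝕜] E) :
    ker (adjoint S ∘ₗ S + adjoint T ∘ₗ T) = ker S ⊓ ker T := by
  refine le_antisymm (fun x hx => ?_) (fun x ⟨hS, hT⟩ => by simp_all)
  have hnorms : ‖S x‖ ^ 2 + ‖T x‖ ^ 2 = 0 := by
    have h := congrArg (fun y => RCLike.re (inner 𝕜 y x)) (mem_ker.mp hx)
    simpa [inner_add_left, adjoint_inner_left, ← inner_self_eq_norm_sq] using h
  obtain ⟨hSx, hTx⟩ := (add_eq_zero_iff_of_nonneg (sq_nonneg _) (sq_nonneg _)).mp hnorms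
  exact ⟨by simpa using hSx, by simpa using hTx⟩

theorem LinearMap.ker_laplacian (d : E →ₗ[𝕜] E) :
    ker (d ∘ₗ adjoint d + adjoint d ∘ₗ d) = (range d)ᗮ ⊓ ker d := by
  simpa only [adjoint_adjoint, orthogonal_range] using
    ker_adjoint_comp_self_add_adjoint_comp_self (adjoint d) d

end InnerProduct

/-- Combinatorial Hodge theorem: for `d` with `d² = 0` on a finite-dimensional
real inner product space, with Laplacian `Δ = d d* + d* d`, one has
`range d ⊆ ker d`, `ker Δ ⊆ ker d`, and the composition of the inclusion
`ker Δ ↪ ker d` with the quotient map `ker d → ker d / range d` is a linear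
isomorphism, i.e. `ker Δ ≅ ker d / range d`. -/
theorem ker_laplacian_iso_cohomology
    {E : Type*} [NormedAddCommGroup E] [InnerProductSpace ℝ E]
    [FiniteDimensional ℝ E] (d : E →ₗ[ℝ] E) (hd : d ∘ₗ d = 0) :
    ∃ (h1 : LinearMap.range d ≤ LinearMap.ker d)
      (h2 : LinearMap.ker (d ∘ₗ LinearMap.adjoint d + LinearMap.adjoint d ∘ₗ d)
              ≤ LinearMap.ker d),
      Function.Bijective
        (((LinearMap.range d).comap (LinearMap.ker d).subtype).mkQ ∘ₗ
          Submodule.inclusion h2) := by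
  have h1 : range d ≤ ker d := range_le_ker_iff.mpr hd
  have h2 := (ker_laplacian d).trans_le inf_le_right
  refine ⟨h1, h2, bijective_mkQ_comp_inclusion_of_disjoint_of_sup_eq h2 ?_ ?_⟩
  · exact (orthogonal_disjoint _).mono_right ((ker_laplacian d).trans_le inf_le_left)
  · rw [ker_laplacian, sup_orthogonal_inf_of_hasOrthogonalProjection h1]
end

section
/- Let E be a finite-dimensional real inner product space and d : E → E a linear map with d ∘ d = 0; let d* be the adjoint of d and Δ = d ∘ d* + d* ∘ d. Then every closed element admits a Hodge decomposition: for every u ∈ E with d u = 0 there exist u₀ ∈ ker(Δ) and u' ∈ E such that u = u₀ + d u'. -/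
/-! A closed `u` splits orthogonally as `p + d v` with `p ⊥ range d`, i.e. `d* p = 0`.
Since `d² = 0`, `d p = d u - d (d v) = 0`, so `p` lies in `ker d ∩ ker d* ⊆ ker Δ`. -/

open LinearMap

section

variable {𝕜 E F : Type*} [RCLike 𝕜]
  [NormedAddCommGroup E] [InnerProductSpace 𝕜 E] [FiniteDimensional 𝕜 E]
  [NormedAddCommGroup F] [InnerProductSpace 𝕜 F] [FiniteDimensional 𝕜 F]

theorem LinearMap.exists_mem_ker_adjoint_add_apply (A : E →ₗ[𝕜] F) (u : F) :
    ∃ p ∈ ker A.adjoint, ∃ v : E, u = p + A v := by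
  obtain ⟨w, ⟨v, rfl⟩, p, hp, rfl⟩ := (range A).exists_add_mem_mem_orthogonal u
  rw [orthogonal_range] at hp
  exact ⟨p, hp, v, add_comm _ _⟩

theorem LinearMap.ker_inf_ker_adjoint_le_ker_laplacian (d : E →ₗ[𝕜] E) :
    ker d ⊓ ker d.adjoint ≤ ker (d ∘ₗ d.adjoint + d.adjoint ∘ₗ d) := by
  rintro p ⟨hdp : d p = 0, hd'p : d.adjoint p = 0⟩
  simp [hdp, hd'p]

end

/-- Hodge decomposition of closed elements: for `d` with `d² = 0` on a
finite-dimensional real inner product space and Laplacian `Δ = d d* + d* d`,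
every `u` with `d u = 0` can be written as `u = u₀ + d u'` with `Δ u₀ = 0`. -/
theorem closed_eq_harmonic_add_exact
    {E : Type*} [NormedAddCommGroup E] [InnerProductSpace ℝ E]
    [FiniteDimensional ℝ E] (d : E →ₗ[ℝ] E) (hd : d ∘ₗ d = 0)
    (u : E) (hu : d u = 0) :
    ∃ u₀ ∈ LinearMap.ker (d ∘ₗ LinearMap.adjoint d + LinearMap.adjoint d ∘ₗ d),
      ∃ u' : E, u = u₀ + d u' := by
  obtain ⟨p, hp, v, rfl⟩ := d.exists_mem_ker_adjoint_add_apply u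
  have hdp : d p = 0 := by
    simpa [← comp_apply d d, hd] using hu
  exact ⟨p, d.ker_inf_ker_adjoint_le_ker_laplacian ⟨hdp, hp⟩, v, rfl⟩
end
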